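/- arXiv:2005.08243 — 3 statements merged into one kernel-verified Lean document; each statement's English description precedes it below -/
import Mathlib

section
/- Let G be a finite connected simple graph with at least one edge. Then for every dart e of G, the length of a shortest facial-like walk containing e equals the length of a shortest facial-like walk containing its reverse; that is, f_w(e) = f_w(ē). -/
/-! Reversing a facial-like walk `e₀, …, e_{k-1}` and reversing each of its darts gives the
facial-like walk `ē_{k-1}, …, ē₀` of the same length, containing `ē` whenever the original
contains `e`. Hence the darts `e` and `ē` lie on facial-like walks of exactly the same lengths. -/

namespace Genus

open SimpleGraph

variable {V : Type*} (G : SimpleGraph V)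

/-- The dart-reversal involution, as a permutation of the darts. -/
def dartRev : Equiv.Perm G.Dart where
  toFun d := d.symm
  invFun d := d.symm
  left_inv d := d.symm_symm
  right_inv d := d.symm_symm

/-- A rotation system on `G`: a permutation of the darts sending each dart to a dart
with the same initial vertex, whose restriction to the darts leaving any fixed vertex
is a single cycle (equivalently, acts transitively on them). -/
def IsRotationSystem (σ : Equiv.Perm G.Dart) : Prop :=
  (∀ d : G.Dart, (σ d).fst = d.fst) ∧
    ∀ d d' : G.Dart, d.fst = d'.fst → ∃ n : ℕ, (σ ^ n) d = d'

/-- The face permutation `φ(d) = σ(d̄)` of the embedding `(G, σ)`. -/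
def facePerm (σ : Equiv.Perm G.Dart) : Equiv.Perm G.Dart := σ * dartRev G

/-- Two darts are equivalent iff they lie in the same face (same orbit of `φ`). -/
def faceSetoid (σ : Equiv.Perm G.Dart) : Setoid G.Dart :=
  ⟨(facePerm G σ).SameCycle,
    ⟨fun x => Equiv.Perm.SameCycle.refl _ x, fun h => h.symm, fun h h' => h.trans h'⟩⟩

/-- The number of faces of the embedding `(G, σ)`: the number of orbits of the
face permutation on the darts. -/
noncomputable def numFaces (σ : Equiv.Perm G.Dart) : ℕ :=
  Nat.card (Quotient (faceSetoid G σ))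

/-- `faceSize G σ e` is `f(e)`, the number of darts in the face containing `e`. -/
noncomputable def faceSize (σ : Equiv.Perm G.Dart) (e : G.Dart) : ℕ :=
  Nat.card {d : G.Dart // (facePerm G σ).SameCycle e d}

/-- The genus `1 + (|E| - |V| - |F|)/2` of the embedding `(G, σ)`. -/
noncomputable def embGenus [Fintype V] (σ : Equiv.Perm G.Dart) : ℚ :=
  1 + ((Nat.card G.edgeSet : ℚ) - (Nat.card V : ℚ) - (numFaces G σ : ℚ)) / 2

/-- The set of genera of all embeddings of `G`; the genus of `G` is its minimum. -/
def genusSet [Fintype V] : Set ℚ :=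
  {g : ℚ | ∃ σ : Equiv.Perm G.Dart, IsRotationSystem G σ ∧ embGenus G σ = g}

/-- A facial-like walk: a cyclic sequence of `k` pairwise distinct darts such that each dart
starts at the end vertex of the previous one, and a dart is followed by its reverse
iff its end vertex has degree 1. -/
def IsFacialLikeWalk [Fintype V] [DecidableRel G.Adj] {k : ℕ} (w : Fin k → G.Dart) : Prop :=
  ∃ hk : 0 < k, Function.Injective w ∧
    ∀ i : Fin k,
      (w ⟨(i + 1) % k, Nat.mod_lt _ hk⟩).fst = (w i).snd ∧
        (w ⟨(i + 1) % k, Nat.mod_lt _ hk⟩ = (w i).symm ↔ G.degree (w i).snd = 1)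

/-- `fw G e` is `f_w(e)`, the length of a shortest facial-like walk containing the dart `e`. -/
noncomputable def fw [Fintype V] [DecidableRel G.Adj] (e : G.Dart) : ℕ :=
  sInf {k : ℕ | ∃ w : Fin k → G.Dart, IsFacialLikeWalk G w ∧ ∃ i, w i = e}

end Genus

namespace Genus

open SimpleGraph

variable {V : Type*} [Fintype V] {G : SimpleGraph V} [DecidableRel G.Adj] {k : ℕ}

lemma isFacialLikeWalk_iff [NeZero k] {w : Fin k → G.Dart} :
    IsFacialLikeWalk G w ↔ Function.Injective w ∧
      ∀ i, (w (i + 1)).fst = (w i).snd ∧ (w (i + 1) = (w i).symm ↔ G.degree (w i).snd = 1) := by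
  have hsucc : ∀ i : Fin k, (⟨(i + 1) % k, Nat.mod_lt _ (NeZero.pos k)⟩ : Fin k) = i + 1 :=
    fun i => Fin.ext (by simp [Fin.val_add, Nat.add_mod])
  simp only [IsFacialLikeWalk, hsucc, exists_prop, and_iff_right (NeZero.pos k)]

lemma IsFacialLikeWalk.neZero {w : Fin k → G.Dart} (hw : IsFacialLikeWalk G w) : NeZero k :=
  ⟨hw.1.ne'⟩

/-- Index `-i` of the reversed walk carries the reverse of the `-i`-th dart: this is
`ē_{k-1}, …, ē₀` rotated to start at `ē₀`. -/
lemma IsFacialLikeWalk.reverse [NeZero k] {w : Fin k → G.Dart} (hw : IsFacialLikeWalk G w) :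
    IsFacialLikeWalk G (fun i => (w (-i)).symm) := by
  obtain ⟨hinj, hstep⟩ := isFacialLikeWalk_iff.mp hw
  refine isFacialLikeWalk_iff.mpr
    ⟨fun a b hab => neg_injective (hinj (Dart.symm_involutive.injective hab)), fun i => ?_⟩
  obtain ⟨hadj, hback⟩ := hstep (-(i + 1))
  rw [show -(i + 1) + 1 = -i by abel] at hadj hback
  refine ⟨hadj.symm, ?_⟩
  change _ ↔ G.degree (w (-i)).fst = 1
  rw [hadj, eq_comm]
  exact hback

lemma exists_facialLikeWalk_symm {w : Fin k → G.Dart} (hw : IsFacialLikeWalk G w) {e : G.Dart}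
    (he : ∃ i, w i = e) : ∃ w' : Fin k → G.Dart, IsFacialLikeWalk G w' ∧ ∃ i, w' i = e.symm := by
  have := hw.neZero
  obtain ⟨i, rfl⟩ := he
  exact ⟨_, hw.reverse, -i, by rw [neg_neg]⟩

end Genus

open SimpleGraph in
theorem fw_symm_general
    {V : Type*} [Fintype V] (G : SimpleGraph V) [DecidableRel G.Adj]
    (e : G.Dart) :
    Genus.fw G e = Genus.fw G e.symm := by
  unfold Genus.fw
  congr 1
  refine Set.Subset.antisymm (fun k ⟨w, hw, he⟩ => Genus.exists_facialLikeWalk_symm hw he)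
    fun k ⟨w, hw, he⟩ => ?_
  exact e.symm_symm ▸ Genus.exists_facialLikeWalk_symm hw he

open SimpleGraph in
/-- In a finite connected simple graph with at least one edge, the length of a
shortest facial-like walk containing a dart equals that of its reverse: `f_w(e) = f_w(ē)`. -/
theorem fw_symm
    {V : Type*} [Fintype V] [DecidableEq V] (G : SimpleGraph V) [DecidableRel G.Adj]
    (hconn : G.Connected) (hE : G.edgeSet.Nonempty) (e : G.Dart) :
    Genus.fw G e = Genus.fw G e.symm :=
  fw_symm_general G e
end

section
/- Let G be a finite connected simple graph with at least one edge, let σ be a rotation system on G, let s₀ : {1, …, 2|E|} → ℕ be a nondecreasing enumeration of the multiset {f_w(e) : e a dart of G}, and set m = s₀[2|E|]. Then m ≤ 2|E| and the number of faces of the embedding (G,σ) satisfies |F| ≤ 1 + Σ_{i=1}^{2|E|−m} 1/s₀[i]. -/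
open SimpleGraph Finset Function

theorem Finset.sum_comp_eq_of_val_map_eq {β γ δ M : Type*} [AddCommMonoid M] {s : Finset β}
    {t : Finset γ} {f : β → δ} {g : γ → δ} (hfg : s.val.map f = t.val.map g) (h : δ → M) :
    ∑ x ∈ s, h (f x) = ∑ y ∈ t, h (g y) := by
  simpa only [Finset.sum, Multiset.map_map, Function.comp_def] using
    congrArg (fun m => (m.map h).sum) hfg

/-- If `t` enumerates the values of `g` in nonincreasing order, then any `n` of these values sum
to at most `t 1 + ⋯ + t n`. -/
theorem Finset.sum_le_sum_Icc_of_val_map_eq {ι α : Type*} [Fintype ι] [AddCommGroup α]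
    [LinearOrder α] [IsOrderedAddMonoid α] {g : ι → α} {t : ℕ → α} {N n : ℕ} (hnN : n ≤ N)
    (ht : AntitoneOn t (Set.Icc 1 N)) (ht₀ : ∀ i ∈ Set.Icc 1 N, 0 ≤ t i)
    (hgt : (Icc 1 N).val.map t = univ.val.map g) {S : Finset ι} (hS : #S ≤ n) :
    ∑ x ∈ S, g x ≤ ∑ i ∈ Icc 1 n, t i := by
  rcases Nat.eq_zero_or_pos n with rfl | hn
  · simp [card_eq_zero.mp (Nat.le_zero.mp hS)]
  set θ := t n
  have hθ : 0 ≤ θ := ht₀ n ⟨hn, hnN⟩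
  -- `(· - θ)⁺` keeps exactly the first `n` values of `t`
  have htop : ∑ i ∈ Icc 1 N, (t i - θ)⁺ = ∑ i ∈ Icc 1 n, (t i - θ) := by
    rw [← sum_subset (Icc_subset_Icc_right hnN)]
    · refine sum_congr rfl fun i hi => posPart_eq_self.mpr (sub_nonneg.mpr ?_)
      obtain ⟨h1i, hin⟩ := mem_Icc.mp hi
      exact ht ⟨h1i, hin.trans hnN⟩ ⟨hn, hnN⟩ hin
    · intro i hi hin
      obtain ⟨h1i, hiN⟩ := mem_Icc.mp hi
      refine posPart_eq_zero.mpr (sub_nonpos.mpr (ht ⟨hn, hnN⟩ ⟨h1i, hiN⟩ ?_))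
      simp only [mem_Icc, h1i, true_and, not_le] at hin
      exact hin.le
  calc ∑ x ∈ S, g x ≤ ∑ x ∈ S, ((g x - θ)⁺ + θ) :=
        sum_le_sum fun x _ => sub_le_iff_le_add.mp (le_posPart _)
    _ = ∑ x ∈ S, (g x - θ)⁺ + #S • θ := by rw [sum_add_distrib, sum_const]
    _ ≤ ∑ x, (g x - θ)⁺ + n • θ :=
        add_le_add (sum_le_sum_of_subset_of_nonneg (subset_univ S) fun _ _ _ => posPart_nonneg _)
          (nsmul_le_nsmul_left hθ hS)
    _ = ∑ i ∈ Icc 1 N, (t i - θ)⁺ + n • θ := by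
        rw [sum_comp_eq_of_val_map_eq hgt fun a => (a - θ)⁺]
    _ = ∑ i ∈ Icc 1 n, t i := by
        rw [htop, sum_sub_distrib, sum_const, Nat.card_Icc, Nat.add_sub_cancel, sub_add_cancel]

theorem Equiv.Perm.minimalPeriod_le_card_sameCycle {α : Type*} [Finite α] (f : Equiv.Perm α)
    (x : α) : minimalPeriod f x ≤ Nat.card {y // f.SameCycle x y} := by
  have hinj : Injective fun k : Fin (minimalPeriod f x) =>
      (⟨f^[k] x, k, by rw [zpow_natCast, Equiv.Perm.iterate_eq_pow]⟩ : {y // f.SameCycle x y}) :=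
    fun i j hij => Fin.ext (iterate_injOn_Iio_minimalPeriod i.2 j.2 (congrArg Subtype.val hij))
  simpa using Nat.card_le_card_of_injective _ hinj

namespace Genus

variable {V : Type*} {G : SimpleGraph V} {σ : Equiv.Perm G.Dart}

theorem IsRotationSystem.facePerm_fst (hσ : IsRotationSystem G σ) (d : G.Dart) :
    (facePerm G σ d).fst = d.snd :=
  hσ.1 d.symm

section Walks

variable [Fintype V] [DecidableRel G.Adj]

theorem IsRotationSystem.apply_eq_self_iff (hσ : IsRotationSystem G σ) (d : G.Dart) :
    σ d = d ↔ G.degree d.fst = 1 := by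
  classical
  rw [← G.dart_fst_fiber_card_eq_degree d.fst, card_eq_one]
  constructor
  · intro hfix
    refine ⟨d, eq_singleton_iff_unique_mem.mpr ⟨by simp, fun d' hd' => ?_⟩⟩
    obtain ⟨k, hk⟩ := hσ.2 d d' (mem_filter.mp hd').2.symm
    rw [← hk, Equiv.Perm.pow_apply_eq_self_of_apply_eq_self hfix]
  · rintro ⟨a, ha⟩
    have hd : d ∈ ({d' : G.Dart | d'.fst = d.fst} : Finset _) := by simp
    have hσd : σ d ∈ ({d' : G.Dart | d'.fst = d.fst} : Finset _) := by simp [hσ.1 d]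
    rw [ha, mem_singleton] at hd hσd
    rw [hσd, hd]

theorem IsRotationSystem.facePerm_eq_symm_iff (hσ : IsRotationSystem G σ) (d : G.Dart) :
    facePerm G σ d = d.symm ↔ G.degree d.snd = 1 :=
  hσ.apply_eq_self_iff d.symm

theorem IsRotationSystem.exists_isFacialLikeWalk_minimalPeriod (hσ : IsRotationSystem G σ)
    (e : G.Dart) : ∃ w : Fin (minimalPeriod (facePerm G σ) e) → G.Dart,
      IsFacialLikeWalk G w ∧ ∃ i, w i = e := by
  set φ := facePerm G σ
  have hpos : 0 < minimalPeriod φ e := NeZero.pos (minimalPeriod (φ • ·) e)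
  refine ⟨fun k => φ^[k] e, ⟨hpos, fun i j hij =>
    Fin.ext (iterate_injOn_Iio_minimalPeriod i.2 j.2 hij), fun i => ?_⟩, ⟨0, hpos⟩, rfl⟩
  have hnext : φ^[(i + 1) % minimalPeriod φ e] e = φ (φ^[i] e) := by
    rw [iterate_mod_minimalPeriod_eq, iterate_succ_apply']
  dsimp only
  rw [hnext]
  exact ⟨hσ.facePerm_fst _, hσ.facePerm_eq_symm_iff _⟩

theorem IsRotationSystem.fw_le_faceSize (hσ : IsRotationSystem G σ) (e : G.Dart) :
    fw G e ≤ faceSize G σ e :=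
  (Nat.sInf_le (hσ.exists_isFacialLikeWalk_minimalPeriod e)).trans
    ((facePerm G σ).minimalPeriod_le_card_sameCycle e)

theorem IsRotationSystem.fw_pos (hσ : IsRotationSystem G σ) (e : G.Dart) : 0 < fw G e := by
  obtain ⟨w, ⟨hk, -⟩, -⟩ :
      fw G e ∈ {k | ∃ w : Fin k → G.Dart, IsFacialLikeWalk G w ∧ ∃ i, w i = e} :=
    Nat.sInf_mem ⟨_, hσ.exists_isFacialLikeWalk_minimalPeriod e⟩
  exact hk

end Walks

section Faces

variable [Fintype V] [DecidableEq V] [DecidableRel G.Adj] {K : Type*} [DivisionRing K] [CharZero K]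

variable (σ) in
def face (e : G.Dart) : Finset G.Dart := {d | (facePerm G σ).SameCycle e d}

theorem card_face (e : G.Dart) : #(face σ e) = faceSize G σ e := by
  rw [faceSize, Nat.card_eq_fintype_card, Fintype.card_subtype, face]

theorem faceSize_eq_of_mem_face {e d : G.Dart} (hd : d ∈ face σ e) :
    faceSize G σ d = faceSize G σ e :=
  Nat.card_congr <| Equiv.subtypeEquivRight fun _ =>
    ⟨((mem_filter.mp hd).2).trans, ((mem_filter.mp hd).2.symm).trans⟩

theorem sum_face_inv_faceSize (e : G.Dart) : ∑ d ∈ face σ e, (1 / faceSize G σ d : K) = 1 := by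
  have he : (faceSize G σ e : K) ≠ 0 := by
    rw [← card_face]
    exact Nat.cast_ne_zero.mpr (card_ne_zero_of_mem (mem_filter.mpr ⟨mem_univ e, .refl _ e⟩))
  rw [sum_congr rfl fun d hd => by rw [faceSize_eq_of_mem_face hd], sum_const, card_face,
    nsmul_eq_mul, mul_one_div_cancel he]

theorem numFaces_eq_sum_inv_faceSize : (numFaces G σ : K) = ∑ d, (1 / faceSize G σ d : K) := by
  classical
  rw [← sum_fiberwise univ (Quotient.mk (faceSetoid G σ)), numFaces, Nat.card_eq_fintype_card,
    Fintype.card_eq_sum_ones, Nat.cast_sum]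
  refine sum_congr rfl fun q _ => ?_
  induction q using Quotient.inductionOn with
  | h e =>
    refine (Nat.cast_one.trans (sum_face_inv_faceSize (σ := σ) e).symm).trans ?_
    refine sum_congr (ext fun d => ?_) fun _ _ => rfl
    simp only [mem_filter, mem_univ, true_and, face, Quotient.eq]
    exact Equiv.Perm.sameCycle_comm

theorem numFaces_eq_one_add_sum_compl_face (e : G.Dart) :
    (numFaces G σ : K) = 1 + ∑ d ∈ (face σ e)ᶜ, (1 / faceSize G σ d : K) := by
  rw [numFaces_eq_sum_inv_faceSize, ← sum_add_sum_compl (face σ e), sum_face_inv_faceSize]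

end Faces

end Genus

open SimpleGraph in
theorem numFaces_le_one_add_sum_inv_s0_general
    {V : Type*} [Fintype V] [DecidableEq V] (G : SimpleGraph V) [DecidableRel G.Adj]
    (hE : G.edgeSet.Nonempty)
    (σ : Equiv.Perm G.Dart) (hσ : Genus.IsRotationSystem G σ)
    (s₀ : ℕ → ℕ)
    (hmono : MonotoneOn s₀ (Set.Icc 1 (2 * G.edgeFinset.card)))
    (henum : (Finset.Icc 1 (2 * G.edgeFinset.card)).val.map s₀ =
      (Finset.univ.val : Multiset G.Dart).map (Genus.fw G)) :
    s₀ (2 * G.edgeFinset.card) ≤ 2 * G.edgeFinset.card ∧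
      (Genus.numFaces G σ : ℚ) ≤
        1 + ∑ i ∈ Finset.Icc 1 (2 * G.edgeFinset.card - s₀ (2 * G.edgeFinset.card)),
          1 / (s₀ i : ℚ) := by
  set N := 2 * #G.edgeFinset
  have hN : 1 ≤ N := Nat.mul_pos two_pos (card_pos.mpr (Set.toFinset_nonempty.mpr hE))
  have hval : ∀ i ∈ Set.Icc 1 N, ∃ d, Genus.fw G d = s₀ i := fun i hi => by
    obtain ⟨d, -, hd⟩ := Multiset.mem_map.mp
      (henum ▸ Multiset.mem_map_of_mem s₀ (mem_Icc.mpr hi) : s₀ i ∈ univ.val.map (Genus.fw G))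
    exact ⟨d, hd⟩
  obtain ⟨e₀, he₀⟩ := hval N ⟨hN, le_rfl⟩
  have hm : s₀ N ≤ Genus.faceSize G σ e₀ := he₀ ▸ hσ.fw_le_faceSize e₀
  have hcompl : #(Genus.face σ e₀)ᶜ + Genus.faceSize G σ e₀ = N := by
    rw [← Genus.card_face, card_compl_add_card, G.dart_card_eq_twice_card_edges]
  refine ⟨by omega, ?_⟩
  have hpos : ∀ i ∈ Set.Icc 1 N, (0 : ℚ) < s₀ i := fun i hi => by
    obtain ⟨d, hd⟩ := hval i hi
    exact_mod_cast hd ▸ hσ.fw_pos d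
  have hanti : AntitoneOn (fun i => 1 / (s₀ i : ℚ)) (Set.Icc 1 N) := fun i hi j hj hij =>
    one_div_le_one_div_of_le (hpos i hi) (by exact_mod_cast hmono hi hj hij)
  have henum' : (Icc 1 N).val.map (fun i => 1 / (s₀ i : ℚ)) =
      univ.val.map (fun d => 1 / (Genus.fw G d : ℚ)) := by
    simpa only [Multiset.map_map, Function.comp_def] using
      congrArg (Multiset.map fun k : ℕ => 1 / (k : ℚ)) henum
  calc (Genus.numFaces G σ : ℚ)
      = 1 + ∑ d ∈ (Genus.face σ e₀)ᶜ, 1 / (Genus.faceSize G σ d : ℚ) :=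
        Genus.numFaces_eq_one_add_sum_compl_face e₀
    _ ≤ 1 + ∑ d ∈ (Genus.face σ e₀)ᶜ, 1 / (Genus.fw G d : ℚ) := by
        gcongr with d
        · exact_mod_cast hσ.fw_pos d
        · exact hσ.fw_le_faceSize d
    _ ≤ 1 + ∑ i ∈ Icc 1 (N - s₀ N), 1 / (s₀ i : ℚ) := by
        gcongr
        exact sum_le_sum_Icc_of_val_map_eq (Nat.sub_le _ _) hanti
          (fun i hi => one_div_nonneg.mpr (hpos i hi).le) henum' (by omega)

open SimpleGraph in
/-- Let `s₀ : {1, …, 2|E|} → ℕ` be a nondecreasing enumeration of the multiset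
`{f_w(e) : e a dart of G}` and `m = s₀[2|E|]`. Then `m ≤ 2|E|` and the number of faces of
the embedding `(G, σ)` satisfies `|F| ≤ 1 + ∑_{i=1}^{2|E|-m} 1 / s₀[i]`. -/
theorem numFaces_le_one_add_sum_inv_s0
    {V : Type*} [Fintype V] [DecidableEq V] (G : SimpleGraph V) [DecidableRel G.Adj]
    (hconn : G.Connected) (hE : G.edgeSet.Nonempty)
    (σ : Equiv.Perm G.Dart) (hσ : Genus.IsRotationSystem G σ)
    (s₀ : ℕ → ℕ)
    (hmono : MonotoneOn s₀ (Set.Icc 1 (2 * G.edgeFinset.card)))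
    (henum : (Finset.Icc 1 (2 * G.edgeFinset.card)).val.map s₀ =
      (Finset.univ.val : Multiset G.Dart).map (Genus.fw G)) :
    s₀ (2 * G.edgeFinset.card) ≤ 2 * G.edgeFinset.card ∧
      (Genus.numFaces G σ : ℚ) ≤
        1 + ∑ i ∈ Finset.Icc 1 (2 * G.edgeFinset.card - s₀ (2 * G.edgeFinset.card)),
          1 / (s₀ i : ℚ) :=
  numFaces_le_one_add_sum_inv_s0_general G hE σ hσ s₀ hmono henum
end

section
/- Let G be a finite connected simple graph with at least four vertices and let v be a vertex of G of degree 2 whose two (distinct) neighbours u and w are adjacent in G. Then the graph G − v obtained by deleting v (and its two incident edges) is connected and has the same genus as G. -/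
/-!
Restricting a rotation system `σ` of `G` to the darts of `G − v` by first return (skipping the
four darts incident with `v`) gives a rotation system `σ'` of `G − v`. Let `φ` be the face
permutation of `σ` and `p`, `q` the darts of `G − v` that `φ` sends to `u → v` and `w → v`;
then the face permutation of `σ'` is the first-return map of `φ` composed with the
transposition `(p q)`. Taking first returns keeps the number of cycles (every face of `G` has a
dart avoiding `v`) and a transposition changes it by exactly one, so `σ'` has at least one face
fewer than `σ`; as `|E| − |V|` also drops by one, `genus(G − v, σ') ≤ genus(G, σ)`.
Conversely every rotation system of `G − v` is the restriction of one of `G` in which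
`u → w, w → v, v → u` bounds a triangular face; then `q` is the dart `u → w`, a fixed point of
the first-return map, so the transposition merges two cycles and the genera agree.
Connectivity survives because a walk through `v` can take the edge `uw` instead.
-/

open Function Finset

theorem Setoid.card_quotient_eq_add_one {α : Type*} [Finite α] {r s : Setoid α} (hrs : r ≤ s)
    {x y : α} (hxy : s x y) (hnxy : ¬ r x y) (hsplit : ∀ a, s a x → r a x ∨ r a y)
    (hrest : ∀ a b, s a b → ¬ s a x → r a b) :
    Nat.card (Quotient r) = Nat.card (Quotient s) + 1 := by
  let F : {q : Quotient r // q ≠ ⟦y⟧} → Quotient s := fun q => Quotient.map' id hrs q.1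
  have hF : Bijective F := by
    constructor
    · rintro ⟨qa, ha⟩ ⟨qb, hb⟩ h
      induction qa using Quotient.ind with | _ a =>
      induction qb using Quotient.ind with | _ b =>
      have hab : s a b := Quotient.exact h
      have hay : ¬ r a y := fun h => ha (Quotient.sound h)
      have hby : ¬ r b y := fun h => hb (Quotient.sound h)
      refine Subtype.ext (Quotient.sound ?_)
      by_cases hax : s a x
      · have hbx : s b x := s.trans (s.symm hab) hax
        exact r.trans ((hsplit a hax).resolve_right hay) (r.symm ((hsplit b hbx).resolve_right hby))
      · exact hrest a b hab hax
    · intro q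
      induction q using Quotient.ind with | _ a =>
      by_cases hay : r a y
      · exact ⟨⟨⟦x⟧, fun h => hnxy (Quotient.exact h)⟩,
          Quotient.sound (s.trans hxy (s.symm (hrs hay)))⟩
      · exact ⟨⟨⟦a⟧, fun h => hay (Quotient.exact h)⟩, rfl⟩
  classical
  rw [← Nat.card_eq_of_bijective F hF, ← Finite.card_option,
    Nat.card_congr (Equiv.optionSubtypeNe _)]

theorem IsLeast.of_forall_exists_le {α : Type*} [PartialOrder α] {s t : Set α} {a : α}
    (ha : IsLeast s a) (hst : ∀ x ∈ s, ∃ y ∈ t, y ≤ x)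
    (hts : ∀ y ∈ t, ∃ x ∈ s, x ≤ y) :
    IsLeast t a := by
  obtain ⟨y, hy, hya⟩ := hst a ha.1
  obtain ⟨x, hx, hxy⟩ := hts y hy
  obtain rfl : y = a := le_antisymm hya ((ha.2 hx).trans hxy)
  exact ⟨hy, fun z hz => let ⟨x, hx, hxz⟩ := hts z hz; (ha.2 hx).trans hxz⟩

namespace Equiv.Perm

variable {α β : Type*}

noncomputable def cycleCount (π : Perm α) : ℕ := Nat.card (Quotient (SameCycle.setoid π))

theorem SameCycle.map [Finite β] {τ : Perm β} {π : Perm α} {ι : β → α}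
    (h : ∀ b, π.SameCycle (ι b) (ι (τ b))) {a b : β} (hab : τ.SameCycle a b) :
    π.SameCycle (ι a) (ι b) := by
  obtain ⟨n, rfl⟩ := hab.exists_nat_pow_eq
  clear hab
  induction n with
  | zero => exact .rfl
  | succ n ih => rw [pow_succ', mul_apply]; exact ih.trans (h _)

section swap

variable [DecidableEq α] {π : Perm α} {x y : α}

theorem mul_swap_apply_of_ne {z : α} (hx : z ≠ x) (hy : z ≠ y) : (π * swap x y) z = π z := by
  rw [mul_apply, swap_apply_of_ne_of_ne hx hy]

theorem sameCycle_mul_swap_apply (h : π.SameCycle x y) (z : α) :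
    π.SameCycle z ((π * swap x y) z) := by
  rw [mul_apply, sameCycle_apply_right]
  rcases eq_or_ne z x with rfl | hx
  · rwa [swap_apply_left]
  rcases eq_or_ne z y with rfl | hy
  · rw [swap_apply_right]; exact h.symm
  rw [swap_apply_of_ne_of_ne hx hy]

theorem pow_mul_swap_apply_of_not_sameCycle (h : π.SameCycle x y) {a : α}
    (ha : ¬π.SameCycle a x) (n : ℕ) : ((π * swap x y) ^ n) a = (π ^ n) a := by
  induction n with
  | zero => rfl
  | succ n ih =>
    have hx : (π ^ n) a ≠ x := fun hn => ha (hn ▸ SameCycle.rfl.pow_right)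
    have hy : (π ^ n) a ≠ y := fun hn => ha ((hn ▸ SameCycle.rfl.pow_right).trans h.symm)
    rw [pow_succ', mul_apply, ih, mul_swap_apply_of_ne hx hy, pow_succ', mul_apply]

theorem sameCycle_mul_swap_left_or_right (n : ℕ) :
    (π * swap x y).SameCycle x ((π ^ n) x) ∨ (π * swap x y).SameCycle y ((π ^ n) x) := by
  have hρx : (π * swap x y) x = π y := by rw [mul_apply, swap_apply_left]
  have hρy : (π * swap x y) y = π x := by rw [mul_apply, swap_apply_right]
  induction n with
  | zero => exact Or.inl .rfl
  | succ n ih =>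
    rw [pow_succ', mul_apply]
    by_cases hx : (π ^ n) x = x
    · right
      rw [hx, ← hρy]
      exact SameCycle.rfl.apply_right
    by_cases hy : (π ^ n) x = y
    · left
      rw [hy, ← hρx]
      exact SameCycle.rfl.apply_right
    rw [← mul_swap_apply_of_ne hx hy]
    exact ih.imp SameCycle.apply_right SameCycle.apply_right

theorem not_sameCycle_mul_swap [Finite α] (hxy : x ≠ y) (h : π.SameCycle x y) :
    ¬(π * swap x y).SameCycle x y := by
  classical
  -- with `x = π^m y`, `m` minimal, the orbit of `x` is `x, π y, …, π^(m-1) y`, avoiding `y`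
  have hex : ∃ m : ℕ, (π ^ m) y = x := h.symm.exists_nat_pow_eq
  set m := Nat.find hex
  have hm : (π ^ m) y = x := Nat.find_spec hex
  have hm0 : 0 < m := Nat.pos_of_ne_zero fun h0 => hxy (by rw [← hm, h0, pow_zero, one_apply])
  have hmin : ∀ k, 0 < k → k < m → (π ^ k) y ≠ y ∧ (π ^ k) y ≠ x := by
    refine fun k hk0 hkm => ⟨fun hk => Nat.find_min hex (by omega : m - k < m) ?_,
      Nat.find_min hex hkm⟩
    rw [← hk, ← mul_apply, ← pow_add, Nat.sub_add_cancel hkm.le, hm]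
  have horbit : ∀ j, ∃ k, 0 < k ∧ k ≤ m ∧ ((π * swap x y) ^ j) x = (π ^ k) y := by
    intro j
    induction j with
    | zero => exact ⟨m, hm0, le_rfl, hm.symm⟩
    | succ j ih =>
      obtain ⟨k, hk0, hkm, hk⟩ := ih
      rw [pow_succ', mul_apply, hk]
      rcases hkm.lt_or_eq with hlt | rfl
      · refine ⟨k + 1, k.succ_pos, hlt, ?_⟩
        rw [mul_swap_apply_of_ne (hmin k hk0 hlt).2 (hmin k hk0 hlt).1, pow_succ', mul_apply]
      · refine ⟨1, Nat.one_pos, hm0, ?_⟩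
        rw [hm, mul_apply, swap_apply_left, pow_one]
  rintro hc
  obtain ⟨j, hj⟩ := hc.exists_nat_pow_eq
  obtain ⟨k, hk0, hkm, hk⟩ := horbit j
  rcases hkm.lt_or_eq with hlt | rfl
  · exact (hmin k hk0 hlt).1 (hk ▸ hj)
  · exact hxy (hm ▸ (hk ▸ hj).symm).symm

theorem sameCycle_mul_swap_of_not_sameCycle [Finite α] (h : ¬π.SameCycle x y) :
    (π * swap x y).SameCycle x y := by
  have hy : (π * swap x y) y = π x := by rw [mul_apply, swap_apply_right]
  by_cases hfix : π x = x
  · have h₁ := (SameCycle.rfl : (π * swap x y).SameCycle y y).apply_right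
    rw [hy, hfix] at h₁
    exact h₁.symm
  -- `(π * swap x y) y = π x`, and from there the orbit follows `π` until it comes back to `x`
  have hclaim : ∀ n, (π ^ n) x ≠ x → (π * swap x y).SameCycle y ((π ^ n) x) := by
    intro n
    induction n with
    | zero => exact fun h₀ => absurd rfl h₀
    | succ n ih =>
      intro _
      rw [pow_succ', mul_apply]
      by_cases hx : (π ^ n) x = x
      · rw [hx, ← hy]
        exact SameCycle.rfl.apply_right
      have hny : (π ^ n) x ≠ y := fun hn => h (hn ▸ SameCycle.rfl.pow_right)
      rw [← mul_swap_apply_of_ne hx hny]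
      exact (ih hx).apply_right
  obtain ⟨n, hn⟩ := (SameCycle.rfl : π.SameCycle x x).symm_apply_right.exists_nat_pow_eq
  have hpx : π.symm x ≠ x := fun h' => hfix (by rw [← h', apply_symm_apply, h'])
  have hpy : π.symm x ≠ y := fun h' => h (by rw [← h']; exact SameCycle.rfl.symm_apply_right)
  have h₂ := (hn ▸ hclaim n (hn ▸ hpx)).apply_right
  rw [mul_swap_apply_of_ne hpx hpy, apply_symm_apply] at h₂
  exact h₂.symm

theorem cycleCount_mul_swap_of_sameCycle [Finite α] (hxy : x ≠ y) (h : π.SameCycle x y) :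
    cycleCount (π * swap x y) = cycleCount π + 1 := by
  refine Setoid.card_quotient_eq_add_one (r := SameCycle.setoid _) (s := SameCycle.setoid π)
    (fun _ _ hab => SameCycle.map (ι := id) (sameCycle_mul_swap_apply h) hab) h
    (not_sameCycle_mul_swap hxy h) (fun a hax => ?_) (fun a b hab hax => ?_)
  · obtain ⟨n, rfl⟩ := hax.symm.exists_nat_pow_eq
    exact (sameCycle_mul_swap_left_or_right n).imp SameCycle.symm SameCycle.symm
  · obtain ⟨n, rfl⟩ := hab.exists_nat_pow_eq
    rw [← pow_mul_swap_apply_of_not_sameCycle h hax]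
    exact SameCycle.rfl.pow_right

theorem cycleCount_mul_swap_of_not_sameCycle [Finite α] (h : ¬π.SameCycle x y) :
    cycleCount (π * swap x y) + 1 = cycleCount π := by
  have hxy : x ≠ y := by rintro rfl; exact h .rfl
  simpa only [mul_swap_mul_self] using
    (cycleCount_mul_swap_of_sameCycle hxy (sameCycle_mul_swap_of_not_sameCycle h)).symm

end swap

section firstReturn

variable (π : Perm α) (ι : β ↪ α)

noncomputable def returnTime (b : β) : ℕ :=
  sInf {n | 0 < n ∧ (π ^ n) (ι b) ∈ Set.range ι}

theorem pow_apply_notMem_range_of_lt_returnTime {b : β} {k : ℕ} (hk : 0 < k)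
    (hlt : k < returnTime π ι b) : (π ^ k) (ι b) ∉ Set.range ι :=
  fun h => Nat.notMem_of_lt_sInf hlt ⟨hk, h⟩

variable [Finite α]

theorem exists_pow_apply_mem_range (b : β) : ∃ n, 0 < n ∧ (π ^ n) (ι b) ∈ Set.range ι :=
  ⟨orderOf π, orderOf_pos π, by
    rw [pow_orderOf_eq_one, one_apply]
    exact Set.mem_range_self b⟩

theorem returnTime_spec (b : β) :
    0 < returnTime π ι b ∧ (π ^ returnTime π ι b) (ι b) ∈ Set.range ι :=
  Nat.sInf_mem (exists_pow_apply_mem_range π ι b)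

noncomputable def firstReturnFun (b : β) : β := (returnTime_spec π ι b).2.choose

theorem apply_firstReturnFun (b : β) :
    ι (firstReturnFun π ι b) = (π ^ returnTime π ι b) (ι b) :=
  (returnTime_spec π ι b).2.choose_spec

theorem firstReturnFun_injective : Injective (firstReturnFun π ι) := by
  intro a b h
  wlog hab : returnTime π ι a ≤ returnTime π ι b generalizing a b
  · exact (this h.symm (le_of_not_ge hab)).symm
  have hret : (π ^ (returnTime π ι b - returnTime π ι a)) (ι b) = ι a := by
    apply (π ^ returnTime π ι a).injective
    rw [← mul_apply, ← pow_add, Nat.add_sub_cancel' hab, ← apply_firstReturnFun,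
      ← apply_firstReturnFun, h]
  rcases Nat.eq_zero_or_pos (returnTime π ι b - returnTime π ι a) with h0 | hpos
  · rw [h0, pow_zero, one_apply] at hret
    exact (ι.injective hret).symm
  · exact absurd ⟨a, hret.symm⟩ (pow_apply_notMem_range_of_lt_returnTime π ι hpos
      (Nat.sub_lt (returnTime_spec π ι b).1 (returnTime_spec π ι a).1))

/-- `ι (firstReturn π ι b)` is the first point after `ι b` on its `π`-orbit that lies in the
range of `ι`. -/
noncomputable def firstReturn : Perm β :=
  haveI := Finite.of_injective ι ι.injective
  Equiv.ofBijective _ (Finite.injective_iff_bijective.mp (firstReturnFun_injective π ι))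

theorem apply_firstReturn (b : β) :
    ι (firstReturn π ι b) = (π ^ returnTime π ι b) (ι b) :=
  apply_firstReturnFun π ι b

variable {π ι}

theorem firstReturn_eq_of_pow_apply {b c : β} {n : ℕ} (hn : 0 < n) (h : (π ^ n) (ι b) = ι c)
    (hmiss : ∀ k, 0 < k → k < n → (π ^ k) (ι b) ∉ Set.range ι) :
    firstReturn π ι b = c := by
  have htime : returnTime π ι b = n :=
    le_antisymm (Nat.sInf_le ⟨hn, c, h.symm⟩) (not_lt.1 fun hlt =>
      hmiss _ (returnTime_spec π ι b).1 hlt (returnTime_spec π ι b).2)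
  exact ι.injective (by rw [apply_firstReturn, htime, h])

theorem firstReturn_eq_of_apply {b c : β} (h : π (ι b) = ι c) : firstReturn π ι b = c :=
  firstReturn_eq_of_pow_apply Nat.one_pos (by rwa [pow_one]) (fun _ h0 h1 => by omega)

theorem firstReturn_eq_of_apply_apply {b c : β} (h₁ : π (ι b) ∉ Set.range ι)
    (h₂ : π (π (ι b)) = ι c) : firstReturn π ι b = c :=
  firstReturn_eq_of_pow_apply two_pos (by rwa [sq, mul_apply]) fun k h0 h1 => by
    obtain rfl : k = 1 := by omega
    rwa [pow_one]

theorem sameCycle_firstReturn_iff {a b : β} :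
    (firstReturn π ι).SameCycle a b ↔ π.SameCycle (ι a) (ι b) := by
  have := Finite.of_injective ι ι.injective
  refine ⟨SameCycle.map fun b => ?_, fun h => ?_⟩
  · rw [apply_firstReturn]
    exact SameCycle.rfl.pow_right
  obtain ⟨n, hn⟩ := h.exists_nat_pow_eq
  clear h
  induction n using Nat.strong_induction_on generalizing a with
  | _ n ih =>
  rcases Nat.eq_zero_or_pos n with rfl | hn0
  · rw [pow_zero, one_apply] at hn
    rw [ι.injective hn]
  have hle : returnTime π ι a ≤ n := not_lt.1 fun hlt =>
    pow_apply_notMem_range_of_lt_returnTime π ι hn0 hlt ⟨b, hn.symm⟩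
  have hstep : (π ^ (n - returnTime π ι a)) (ι (firstReturn π ι a)) = ι b := by
    rw [apply_firstReturn, ← mul_apply, ← pow_add, Nat.sub_add_cancel hle, hn]
  exact (ih _ (Nat.sub_lt hn0 (returnTime_spec π ι a).1) hstep).of_apply_left

theorem cycleCount_firstReturn (h : ∀ x, ∃ b, π.SameCycle x (ι b)) :
    cycleCount (firstReturn π ι) = cycleCount π := by
  refine Nat.card_eq_of_bijective (Quotient.map' ι fun a b => sameCycle_firstReturn_iff.1)
    ⟨fun qa qb hq => ?_, fun q => ?_⟩
  · induction qa using Quotient.ind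
    induction qb using Quotient.ind
    exact Quotient.sound (sameCycle_firstReturn_iff.2 (Quotient.exact hq))
  · induction q using Quotient.ind with | _ x =>
    obtain ⟨b, hb⟩ := h x
    exact ⟨⟦b⟧, Quotient.sound hb.symm⟩

end firstReturn

theorem exists_forall_exists_pow_apply_eq (α : Type*) [Finite α] :
    ∃ ρ : Perm α, ∀ a b, ∃ n : ℕ, (ρ ^ n) a = b := by
  obtain ⟨k, ⟨e⟩⟩ := Finite.exists_equiv_fin α
  by_cases hk : 2 ≤ k
  · refine ⟨e.symm.permCongr (finRotate k), fun a b => ?_⟩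
    have hsupp : ∀ i, finRotate k i ≠ i := fun i => by
      rw [← mem_support, support_finRotate_of_le hk]; exact Finset.mem_univ i
    obtain ⟨n, hn⟩ := (isCycle_finRotate_of_le hk).exists_pow_eq (hsupp (e a)) (hsupp (e b))
    refine ⟨n, ?_⟩
    have hpow : e.symm.permCongr (finRotate k) ^ n = e.symm.permCongr (finRotate k ^ n) :=
      (map_pow e.symm.permCongrHom _ n).symm
    simp [hpow, hn]
  · have : Subsingleton α := e.subsingleton_congr.2 (Fin.subsingleton_iff_le_one.2 (by omega))
    exact ⟨1, fun a b => ⟨0, Subsingleton.elim _ _⟩⟩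

end Equiv.Perm

namespace SimpleGraph

variable {V W : Type*} {G : SimpleGraph V} {H : SimpleGraph W}

def Adj.dart {a b : V} (h : G.Adj a b) : G.Dart := ⟨(a, b), h⟩

@[simp] theorem Adj.dart_inj {a b a' b' : V} {h : G.Adj a b} {h' : G.Adj a' b'} :
    h.dart = h'.dart ↔ a = a' ∧ b = b' := by
  simp [Adj.dart, Dart.ext_iff]

theorem Adj.eq_dart {a b : V} (h : G.Adj a b) {d : G.Dart} (ha : d.fst = a) (hb : d.snd = b) :
    d = h.dart :=
  Dart.ext _ _ (Prod.ext ha hb)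

theorem eq_dart_or_eq_dart_of_fst_eq {v u w : V} (hvu : G.Adj v u) (hvw : G.Adj v w)
    (hN : ∀ z, G.Adj v z → z = u ∨ z = w) {d : G.Dart} (hd : d.fst = v) :
    d = hvu.dart ∨ d = hvw.dart :=
  (hN d.snd (hd ▸ d.adj)).imp (hvu.eq_dart hd) (hvw.eq_dart hd)

theorem eq_dart_or_eq_dart_of_snd_eq {v u w : V} (hvu : G.Adj v u) (hvw : G.Adj v w)
    (hN : ∀ z, G.Adj v z → z = u ∨ z = w) {d : G.Dart} (hd : d.snd = v) :
    d = hvu.symm.dart ∨ d = hvw.symm.dart :=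
  (hN d.fst (hd ▸ d.adj.symm)).imp (hvu.symm.eq_dart · hd) (hvw.symm.eq_dart · hd)

instance Dart.finite [Finite V] : Finite G.Dart :=
  Finite.of_injective Dart.toProd fun a b => Dart.ext a b

def Embedding.mapDart (f : H ↪g G) : H.Dart ↪ G.Dart where
  toFun d := ⟨(f d.fst, f d.snd), f.map_adj_iff.2 d.adj⟩
  inj' d d' h := by
    obtain ⟨h₁, h₂⟩ := Prod.ext_iff.1 (congrArg Dart.toProd h)
    exact Dart.ext _ _ (Prod.ext (f.injective h₁) (f.injective h₂))

@[simp] theorem Embedding.mapDart_fst (f : H ↪g G) (d : H.Dart) : (f.mapDart d).fst = f d.fst :=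
  rfl

theorem Embedding.mapDart_symm (f : H ↪g G) (d : H.Dart) :
    f.mapDart d.symm = (f.mapDart d).symm :=
  rfl

variable (G) (v : V)

abbrev deleteVert : SimpleGraph {x : V // x ≠ v} := G.comap Subtype.val

def deleteVertEmbedding : G.deleteVert v ↪g G :=
  Embedding.comap (Function.Embedding.subtype _) G

variable {G v}

theorem mem_range_deleteVertEmbedding_mapDart {d : G.Dart} :
    d ∈ Set.range (G.deleteVertEmbedding v).mapDart ↔ d.fst ≠ v ∧ d.snd ≠ v := by
  constructor
  · rintro ⟨e, rfl⟩
    exact ⟨e.fst.2, e.snd.2⟩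
  · rintro ⟨h₁, h₂⟩
    exact ⟨⟨(⟨d.fst, h₁⟩, ⟨d.snd, h₂⟩), d.adj⟩, rfl⟩

theorem neighbor_eq_or_eq_of_degree_eq_two [Fintype V] [DecidableRel G.Adj] {u w : V}
    (hdeg : G.degree v = 2) (hvu : G.Adj v u) (hvw : G.Adj v w) (huw : u ≠ w) :
    ∀ z, G.Adj v z → z = u ∨ z = w := by
  classical
  have hN : G.neighborFinset v = {u, w} := (Finset.eq_of_subset_of_card_le
    (by intro z; simp only [Finset.mem_insert, Finset.mem_singleton, mem_neighborFinset]
        rintro (rfl | rfl) <;> assumption)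
    (by rw [card_neighborFinset_eq_degree, hdeg, Finset.card_pair huw])).symm
  intro z hz
  simpa [hN] using (mem_neighborFinset G v z).2 hz

theorem connected_deleteVert {u w : V} (hconn : G.Connected) (hvu : G.Adj v u)
    (huw : G.Adj u w) (hN : ∀ z, G.Adj v z → z = u ∨ z = w) : (G.deleteVert v).Connected := by
  classical
  let f : V → {x : V // x ≠ v} := fun x => if h : x = v then ⟨u, hvu.ne'⟩ else ⟨x, h⟩
  have hf : ∀ x (hx : x ≠ v), f x = ⟨x, hx⟩ := fun x hx => dif_neg hx
  have hf_v : f v = ⟨u, hvu.ne'⟩ := dif_pos rfl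
  have hfv : ∀ z, G.Adj v z → (G.deleteVert v).Reachable ⟨u, hvu.ne'⟩ (f z) := by
    intro z hz
    rcases hN z hz with rfl | rfl
    · rw [hf z hvu.ne']
    · rw [hf z hz.ne']
      exact Adj.reachable huw
  have hstep : ∀ a b, G.Adj a b → (G.deleteVert v).Reachable (f a) (f b) := by
    intro a b hab
    by_cases ha : a = v
    · rw [ha, hf_v]
      exact hfv b (ha ▸ hab)
    by_cases hb : b = v
    · rw [hb, hf_v]
      exact (hfv a (hb ▸ hab.symm)).symm
    rw [hf a ha, hf b hb]
    exact Adj.reachable hab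
  refine (connected_iff _).2 ⟨fun ⟨a, ha⟩ ⟨b, hb⟩ => ?_, ⟨⟨u, hvu.ne'⟩⟩⟩
  rw [← hf a ha, ← hf b hb, reachable_iff_reflTransGen]
  exact Relation.ReflTransGen.lift' f (fun a b hab => (reachable_iff_reflTransGen _ _).1
    (hstep a b hab)) _ _ ((reachable_iff_reflTransGen _ _).1 (hconn.preconnected a b))

theorem card_edgeSet_deleteVert_add_degree [Fintype V] [DecidableEq V] [DecidableRel G.Adj] :
    Nat.card (G.deleteVert v).edgeSet + G.degree v = Nat.card G.edgeSet := by
  have h := G.card_edgeFinset_induce_compl_singleton v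
  rw [card_edgeFinset_deleteIncidenceSet] at h
  have hle : G.degree v ≤ #G.edgeFinset := by
    rw [← card_incidenceFinset_eq_degree]
    exact Finset.card_le_card (G.incidenceFinset_subset v)
  rw [Nat.card_eq_fintype_card, Nat.card_eq_fintype_card, ← edgeFinset_card, ← edgeFinset_card,
    ← Nat.sub_add_cancel hle, ← h]
  -- `G.induce {v}ᶜ` unfolds to `G.deleteVert v`
  rfl

end SimpleGraph

namespace Genus

open SimpleGraph Equiv Equiv.Perm

variable {V W : Type*} {G : SimpleGraph V} {H : SimpleGraph W} {σ : Perm G.Dart}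

theorem numFaces_eq_cycleCount (σ : Perm G.Dart) : numFaces G σ = cycleCount (facePerm G σ) :=
  rfl

theorem facePerm_apply (σ : Perm G.Dart) (d : G.Dart) : facePerm G σ d = σ d.symm :=
  rfl

theorem isRotationSystem_iff [Finite V] :
    IsRotationSystem G σ ↔
      (∀ d, (σ d).fst = d.fst) ∧ ∀ d d' : G.Dart, d.fst = d'.fst → σ.SameCycle d d' :=
  and_congr_right fun _ => forall₂_congr fun _ _ => imp_congr_right fun _ =>
    ⟨fun ⟨_, hn⟩ => hn ▸ SameCycle.rfl.pow_right, SameCycle.exists_nat_pow_eq⟩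

theorem pow_apply_fst (hσ : ∀ d, (σ d).fst = d.fst) (n : ℕ) (d : G.Dart) :
    ((σ ^ n) d).fst = d.fst := by
  induction n with
  | zero => rfl
  | succ n ih => rw [pow_succ', mul_apply, hσ, ih]

theorem fst_eq_of_sameCycle [Finite V] (hfst : ∀ d, (σ d).fst = d.fst) {d d' : G.Dart}
    (h : σ.SameCycle d d') : d'.fst = d.fst := by
  obtain ⟨n, rfl⟩ := h.exists_nat_pow_eq
  exact pow_apply_fst hfst n d

theorem swap_apply_fst [DecidableEq V] {a b : G.Dart} (hab : a.fst = b.fst) (d : G.Dart) :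
    (Equiv.swap a b d).fst = d.fst := by
  rw [swap_apply_def]
  split_ifs <;> simp_all

theorem viaEmbedding_mapDart_apply_fst (f : H ↪g G) {τ : Perm H.Dart}
    (hτ : ∀ e, (τ e).fst = e.fst) (d : G.Dart) : (τ.viaEmbedding f.mapDart d).fst = d.fst := by
  by_cases hd : d ∈ Set.range f.mapDart
  · obtain ⟨e, rfl⟩ := hd
    rw [viaEmbedding_apply, Embedding.mapDart_fst, Embedding.mapDart_fst, hτ]
  · rw [viaEmbedding_apply_of_notMem _ _ _ hd]

theorem IsRotationSystem.eq_of_apply_eq_self (hσ : IsRotationSystem G σ) {d d' : G.Dart}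
    (hd : σ d = d) (h : d.fst = d'.fst) : d' = d := by
  obtain ⟨n, hn⟩ := hσ.2 d d' h
  rw [← hn, pow_apply_eq_self_of_apply_eq_self hd]

theorem IsRotationSystem.apply_ne_self (hσ : IsRotationSystem G σ) {d d' : G.Dart}
    (h : d.fst = d'.fst) (hne : d' ≠ d) : σ d ≠ d :=
  fun hd => hne (hσ.eq_of_apply_eq_self hd h)

theorem IsRotationSystem.firstReturn_mapDart [Finite V] (f : H ↪g G)
    (hσ : IsRotationSystem G σ) :
    IsRotationSystem H (firstReturn σ f.mapDart) := by
  have := Finite.of_injective f f.injective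
  rw [isRotationSystem_iff] at hσ ⊢
  refine ⟨fun d => f.injective ?_, fun d d' h =>
    sameCycle_firstReturn_iff.2 (hσ.2 _ _ (by simp [h]))⟩
  rw [← Embedding.mapDart_fst, apply_firstReturn, pow_apply_fst hσ.1, Embedding.mapDart_fst]

theorem exists_isRotationSystem [Finite V] (G : SimpleGraph V) :
    ∃ σ : Perm G.Dart, IsRotationSystem G σ := by
  choose ρ hρ using fun x : V => exists_forall_exists_pow_apply_eq {d : G.Dart // d.fst = x}
  let E := Equiv.sigmaFiberEquiv fun d : G.Dart => d.fst
  have hpow : ∀ (n : ℕ) (d : G.Dart),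
      (E.permCongr (Perm.sigmaCongrRight ρ) ^ n) d = ((ρ d.fst ^ n) ⟨d, rfl⟩).1 := by
    intro n d
    have h₁ : E.permCongr (Perm.sigmaCongrRight ρ) ^ n =
        E.permCongr (Perm.sigmaCongrRight ρ ^ n) :=
      (map_pow E.permCongrHom _ n).symm
    have h₂ : Perm.sigmaCongrRight ρ ^ n = Perm.sigmaCongrRight (ρ ^ n) :=
      (map_pow (sigmaCongrRightHom _) ρ n).symm
    rw [h₁, h₂]
    rfl
  refine ⟨E.permCongr (Perm.sigmaCongrRight ρ), fun d => ?_, fun d d' h => ?_⟩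
  · rw [← pow_one (E.permCongr _), hpow]
    exact ((ρ d.fst ^ 1) ⟨d, rfl⟩).2
  · obtain ⟨n, hn⟩ := hρ d.fst ⟨d, rfl⟩ ⟨d', h.symm⟩
    exact ⟨n, by rw [hpow, hn]⟩

theorem exists_isLeast_genusSet [Fintype V] (G : SimpleGraph V) :
    ∃ g, IsLeast (genusSet G) g := by
  have hfin : (genusSet G).Finite :=
    (Set.finite_range (embGenus G)).subset (by rintro _ ⟨σ, -, rfl⟩; exact ⟨σ, rfl⟩)
  obtain ⟨σ, hσ⟩ := exists_isRotationSystem G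
  obtain ⟨g, hg, hmin⟩ := Set.exists_min_image _ id hfin ⟨_, σ, hσ, rfl⟩
  exact ⟨g, hg, hmin⟩

section DeleteVertex

variable {v u w : V}

local notation "ι" => SimpleGraph.Embedding.mapDart (SimpleGraph.deleteVertEmbedding G v)

theorem mapDart_fst_ne (e : (G.deleteVert v).Dart) : (ι e).fst ≠ v := e.fst.2

theorem mapDart_snd_ne (e : (G.deleteVert v).Dart) : (ι e).snd ≠ v := e.snd.2

theorem mapDart_ne_dart (e : (G.deleteVert v).Dart) {x : V} (h : G.Adj v x) :
    ι e ≠ h.dart ∧ ι e ≠ h.symm.dart :=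
  ⟨fun h' => mapDart_fst_ne e (congrArg (·.fst) h'),
    fun h' => mapDart_snd_ne e (congrArg (·.snd) h')⟩

theorem dart_mem_range_mapDart (huw : G.Adj u w) (hu : u ≠ v) (hw : w ≠ v) :
    huw.dart ∈ Set.range ι :=
  mem_range_deleteVertEmbedding_mapDart.2 ⟨hu, hw⟩

theorem IsRotationSystem.apply_dart_eq (hσ : IsRotationSystem G σ) (hvu : G.Adj v u)
    (hvw : G.Adj v w) (hN : ∀ z, G.Adj v z → z = u ∨ z = w) (huw : u ≠ w) :
    σ hvu.dart = hvw.dart :=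
  (eq_dart_or_eq_dart_of_fst_eq hvu hvw hN (hσ.1 _)).resolve_left
    (hσ.apply_ne_self (d' := hvw.dart) rfl fun h => huw (congrArg (·.snd) h).symm)

theorem IsRotationSystem.apply_symm_dart_ne (hσ : IsRotationSystem G σ) (hvu : G.Adj v u)
    (huw : G.Adj u w) (hwv : w ≠ v) : σ hvu.symm.dart ≠ hvu.symm.dart :=
  hσ.apply_ne_self (d' := huw.dart) rfl fun h => hwv (congrArg (·.snd) h)

theorem IsRotationSystem.apply_symm_dart_mem_range (hσ : IsRotationSystem G σ)
    (hvu : G.Adj v u) (huw : G.Adj u w) (hwv : w ≠ v) : σ hvu.symm.dart ∈ Set.range ι :=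
  mem_range_deleteVertEmbedding_mapDart.2 ⟨(hσ.1 _).trans_ne hvu.ne', fun h =>
    hσ.apply_symm_dart_ne hvu huw hwv (hvu.symm.eq_dart (hσ.1 _) h)⟩

theorem IsRotationSystem.exists_facePerm_apply_eq (hσ : IsRotationSystem G σ)
    (hvu : G.Adj v u) (huw : G.Adj u w) (hwv : w ≠ v) :
    ∃ p, facePerm G σ (ι p) = hvu.symm.dart := by
  obtain ⟨d, hd⟩ : ∃ d, σ d = hvu.symm.dart := ⟨_, σ.apply_symm_apply _⟩
  have hfst : d.fst = u := (hσ.1 d).symm.trans (by rw [hd]; rfl)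
  have hsnd : d.snd ≠ v := by
    rintro h
    obtain rfl := hvu.symm.eq_dart hfst h
    exact hσ.apply_symm_dart_ne hvu huw hwv hd
  obtain ⟨p, hp⟩ := (mem_range_deleteVertEmbedding_mapDart (d := d.symm)).2
    ⟨hsnd, hfst.trans_ne hvu.ne'⟩
  exact ⟨p, by rw [hp, facePerm_apply, Dart.symm_symm, hd]⟩

theorem IsRotationSystem.facePerm_apply_mem_range_or (hσ : IsRotationSystem G σ)
    (hvu : G.Adj v u) (hvw : G.Adj v w) (hN : ∀ z, G.Adj v z → z = u ∨ z = w)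
    (e : (G.deleteVert v).Dart) :
    facePerm G σ (ι e) ∈ Set.range ι ∨
      facePerm G σ (ι e) = hvu.symm.dart ∨ facePerm G σ (ι e) = hvw.symm.dart := by
  by_cases h : (facePerm G σ (ι e)).snd = v
  · exact Or.inr (eq_dart_or_eq_dart_of_snd_eq hvu hvw hN h)
  · exact Or.inl
      (mem_range_deleteVertEmbedding_mapDart.2 ⟨(hσ.1 _).trans_ne (mapDart_snd_ne e), h⟩)

theorem IsRotationSystem.exists_facePerm_sameCycle (hσ : IsRotationSystem G σ)
    (hvu : G.Adj v u) (hvw : G.Adj v w) (hN : ∀ z, G.Adj v z → z = u ∨ z = w)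
    (huw : G.Adj u w) (d : G.Dart) : ∃ e, (facePerm G σ).SameCycle d (ι e) := by
  have hv : ∀ d : G.Dart, d.fst = v → ∃ e, (facePerm G σ).SameCycle d (ι e) := by
    intro d hd
    obtain ⟨e, he⟩ : facePerm G σ d ∈ Set.range ι := by
      rcases eq_dart_or_eq_dart_of_fst_eq hvu hvw hN hd with rfl | rfl
      · exact hσ.apply_symm_dart_mem_range hvu huw hvw.ne'
      · exact hσ.apply_symm_dart_mem_range hvw huw.symm hvu.ne'
    exact ⟨e, he ▸ SameCycle.rfl.apply_right⟩
  by_cases hd : d.fst = v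
  · exact hv d hd
  by_cases hd' : d.snd = v
  · obtain ⟨e, he⟩ := hv (facePerm G σ d) ((hσ.1 _).trans hd')
    exact ⟨e, SameCycle.rfl.apply_right.trans he⟩
  obtain ⟨e, rfl⟩ := mem_range_deleteVertEmbedding_mapDart.2 ⟨hd, hd'⟩
  exact ⟨e, .rfl⟩

theorem viaEmbedding_deleteVert_apply_of_fst_or_snd (σ' : Perm (G.deleteVert v).Dart)
    (d : G.Dart) (hd : d.fst = v ∨ d.snd = v) :
    σ'.viaEmbedding ι d = d :=
  viaEmbedding_apply_of_notMem σ' ι d fun hmem =>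
    hd.elim (mem_range_deleteVertEmbedding_mapDart.1 hmem).1
      (mem_range_deleteVertEmbedding_mapDart.1 hmem).2

section Insertion

variable [DecidableEq V] (σ' : Perm (G.deleteVert v).Dart) (hvu : G.Adj v u) (hvw : G.Adj v w)
  (huw : G.Adj u w)

/-- `u → v` is inserted just before `u → w` in the rotation at `u` and `w → v` just after
`w → u` in the rotation at `w`, so that `u → w, w → v, v → u` bounds a triangular face. -/
noncomputable def insertionRotation : Perm G.Dart :=
  Equiv.swap huw.dart hvu.symm.dart * (Equiv.swap hvu.dart hvw.dart *
    (σ'.viaEmbedding ι * Equiv.swap huw.symm.dart hvw.symm.dart))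

theorem insertionRotation_apply_v_u :
    insertionRotation σ' hvu hvw huw hvu.dart = hvw.dart := by
  simp [insertionRotation, viaEmbedding_deleteVert_apply_of_fst_or_snd σ' hvu.dart (Or.inl rfl),
    swap_apply_of_ne_of_ne, hvu.ne, hvw.ne]

theorem insertionRotation_apply_u_v :
    insertionRotation σ' hvu hvw huw hvu.symm.dart = huw.dart := by
  simp [insertionRotation,
    viaEmbedding_deleteVert_apply_of_fst_or_snd σ' hvu.symm.dart (Or.inr rfl),
    swap_apply_of_ne_of_ne, hvu.ne, hvw.ne, huw.ne]

theorem insertionRotation_apply_w_u :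
    insertionRotation σ' hvu hvw huw huw.symm.dart = hvw.symm.dart := by
  simp [insertionRotation,
    viaEmbedding_deleteVert_apply_of_fst_or_snd σ' hvw.symm.dart (Or.inr rfl),
    swap_apply_of_ne_of_ne, hvw.ne', huw.ne']

theorem insertionRotation_apply_mapDart {e : (G.deleteVert v).Dart} (he : ι e ≠ huw.symm.dart) :
    insertionRotation σ' hvu hvw huw (ι e) = Equiv.swap huw.dart hvu.symm.dart (ι (σ' e)) := by
  rw [insertionRotation, mul_apply, mul_apply, mul_apply,
    swap_apply_of_ne_of_ne he (mapDart_ne_dart e hvw).2, viaEmbedding_apply,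
    swap_apply_of_ne_of_ne (mapDart_ne_dart _ hvu).1 (mapDart_ne_dart _ hvw).1]

theorem insertionRotation_apply_w_v (hσ' : ∀ e, (σ' e).fst = e.fst) {t : (G.deleteVert v).Dart}
    (ht : ι t = huw.dart) : insertionRotation σ' hvu hvw huw hvw.symm.dart = ι (σ' t.symm) := by
  have ht' : ι t.symm = huw.symm.dart := by rw [Embedding.mapDart_symm, ht]; rfl
  have hfst : (ι (σ' t.symm)).fst = w := by
    rw [Embedding.mapDart_fst, hσ', ← Embedding.mapDart_fst, ht']
    rfl
  have h₁ : ι (σ' t.symm) ≠ huw.dart := fun h =>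
    huw.ne ((congrArg (·.fst) h).symm.trans hfst)
  rw [insertionRotation, mul_apply, mul_apply, mul_apply, swap_apply_right, ← ht',
    viaEmbedding_apply, swap_apply_of_ne_of_ne (mapDart_ne_dart _ hvu).1 (mapDart_ne_dart _ hvw).1,
    swap_apply_of_ne_of_ne h₁ (mapDart_ne_dart _ hvu).2]

end Insertion

section Finite

variable [Finite V]

theorem IsRotationSystem.cycleCount_firstReturn_facePerm (hσ : IsRotationSystem G σ)
    (hvu : G.Adj v u) (hvw : G.Adj v w) (hN : ∀ z, G.Adj v z → z = u ∨ z = w)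
    (huw : G.Adj u w) : cycleCount (firstReturn (facePerm G σ) ι) = numFaces G σ :=
  cycleCount_firstReturn (hσ.exists_facePerm_sameCycle hvu hvw hN huw)

theorem IsRotationSystem.firstReturn_facePerm_eq (hσ : IsRotationSystem G σ)
    (hvu : G.Adj v u) (hvw : G.Adj v w) (hN : ∀ z, G.Adj v z → z = u ∨ z = w) (huw : u ≠ w)
    {q r : (G.deleteVert v).Dart} (hq : facePerm G σ (ι q) = hvw.symm.dart)
    (hr : σ hvu.symm.dart = ι r) : firstReturn (facePerm G σ) ι q = r := by
  have h₁ : facePerm G σ hvw.symm.dart = hvu.dart :=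
    hσ.apply_dart_eq hvw hvu (fun z hz => (hN z hz).symm) huw.symm
  have h₂ : facePerm G σ hvu.dart = ι r := hr
  refine firstReturn_eq_of_pow_apply (n := 3) (by norm_num) ?_ fun k hk0 hk3 => ?_
  · rw [pow_succ', pow_succ', pow_one, mul_apply, mul_apply, hq, h₁, h₂]
  · rw [mem_range_deleteVertEmbedding_mapDart]
    obtain rfl | rfl : k = 1 ∨ k = 2 := by omega
    · rw [pow_one, hq]
      exact fun h => h.2 rfl
    · rw [sq, mul_apply, hq, h₁]
      exact fun h => h.1 rfl

theorem IsRotationSystem.facePerm_firstReturn_apply_eq (hσ : IsRotationSystem G σ)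
    (hvu : G.Adj v u) (hvw : G.Adj v w) (hN : ∀ z, G.Adj v z → z = u ∨ z = w)
    (huw : G.Adj u w) {p q : (G.deleteVert v).Dart}
    (hp : facePerm G σ (ι p) = hvu.symm.dart) (hq : facePerm G σ (ι q) = hvw.symm.dart) :
    facePerm (G.deleteVert v) (firstReturn σ ι) p = firstReturn (facePerm G σ) ι q := by
  obtain ⟨r, hr⟩ := hσ.apply_symm_dart_mem_range hvu huw hvw.ne'
  rw [hσ.firstReturn_facePerm_eq hvu hvw hN huw.ne hq hr.symm, facePerm_apply]
  refine firstReturn_eq_of_apply_apply ?_ ?_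
  · rw [Embedding.mapDart_symm, ← facePerm_apply, hp, mem_range_deleteVertEmbedding_mapDart]
    exact fun h => h.2 rfl
  · rw [Embedding.mapDart_symm, ← facePerm_apply, hp, hr]

theorem IsRotationSystem.facePerm_deleteVert_firstReturn [DecidableEq V]
    (hσ : IsRotationSystem G σ)
    (hvu : G.Adj v u) (hvw : G.Adj v w) (hN : ∀ z, G.Adj v z → z = u ∨ z = w)
    (huw : G.Adj u w) {p q : (G.deleteVert v).Dart}
    (hp : facePerm G σ (ι p) = hvu.symm.dart) (hq : facePerm G σ (ι q) = hvw.symm.dart) :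
    facePerm (G.deleteVert v) (firstReturn σ ι) =
      firstReturn (facePerm G σ) ι * Equiv.swap p q := by
  -- the faces `p, u → v, v → w, s` and `q, w → v, v → u, r` of `G` (with `r = σ (u → v)`,
  -- `s = σ (w → v)`) become `p, r` and `q, s` in `G − v`
  ext e : 1
  rw [mul_apply]
  rcases eq_or_ne e p with rfl | hep
  · rw [swap_apply_left, hσ.facePerm_firstReturn_apply_eq hvu hvw hN huw hp hq]
  rcases eq_or_ne e q with rfl | heq
  · rw [swap_apply_right, hσ.facePerm_firstReturn_apply_eq hvw hvu (fun z hz => (hN z hz).symm)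
      huw.symm hq hp]
  rw [swap_apply_of_ne_of_ne hep heq]
  rcases hσ.facePerm_apply_mem_range_or hvu hvw hN e with ⟨c, hc⟩ | h | h
  · rw [firstReturn_eq_of_apply hc.symm, facePerm_apply]
    exact firstReturn_eq_of_apply (by rw [Embedding.mapDart_symm, ← facePerm_apply, hc])
  · exact absurd ((ι).injective ((facePerm G σ).injective (h.trans hp.symm))) hep
  · exact absurd ((ι).injective ((facePerm G σ).injective (h.trans hq.symm))) heq

theorem IsRotationSystem.numFaces_le_numFaces_deleteVert_add_one (hσ : IsRotationSystem G σ)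
    (hvu : G.Adj v u) (hvw : G.Adj v w) (hN : ∀ z, G.Adj v z → z = u ∨ z = w)
    (huw : G.Adj u w) : numFaces G σ ≤ numFaces (G.deleteVert v) (firstReturn σ ι) + 1 := by
  classical
  obtain ⟨p, hp⟩ := hσ.exists_facePerm_apply_eq hvu huw hvw.ne'
  obtain ⟨q, hq⟩ := hσ.exists_facePerm_apply_eq hvw huw.symm hvu.ne'
  have hpq : p ≠ q := by
    rintro rfl
    exact huw.ne (congrArg (·.fst) (hp.symm.trans hq))
  rw [numFaces_eq_cycleCount (G := G.deleteVert v),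
    hσ.facePerm_deleteVert_firstReturn hvu hvw hN huw hp hq,
    ← hσ.cycleCount_firstReturn_facePerm hvu hvw hN huw]
  by_cases h : (firstReturn (facePerm G σ) ι).SameCycle p q
  · rw [cycleCount_mul_swap_of_sameCycle hpq h]
    omega
  · rw [← cycleCount_mul_swap_of_not_sameCycle h]

theorem IsRotationSystem.numFaces_eq_numFaces_deleteVert_add_one (hσ : IsRotationSystem G σ)
    (hvu : G.Adj v u) (hvw : G.Adj v w) (hN : ∀ z, G.Adj v z → z = u ∨ z = w)
    (huw : G.Adj u w) (hw : σ huw.symm.dart = hvw.symm.dart) (hu : σ hvu.symm.dart = huw.dart) :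
    numFaces G σ = numFaces (G.deleteVert v) (firstReturn σ ι) + 1 := by
  classical
  obtain ⟨q, hq⟩ := dart_mem_range_mapDart huw hvu.ne' hvw.ne'
  have hφq : facePerm G σ (ι q) = hvw.symm.dart := by
    rw [facePerm_apply, hq]
    exact hw
  obtain ⟨p, hp⟩ := hσ.exists_facePerm_apply_eq hvu huw hvw.ne'
  have hpq : p ≠ q := by
    rintro rfl
    exact huw.ne (congrArg (·.fst) (hp.symm.trans hφq))
  have hfix : firstReturn (facePerm G σ) ι q = q :=
    hσ.firstReturn_facePerm_eq hvu hvw hN huw.ne hφq (hu.trans hq.symm)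
  have hsep : ¬(firstReturn (facePerm G σ) ι).SameCycle p q := fun h => hpq (h.eq_of_right hfix)
  rw [numFaces_eq_cycleCount (G := G.deleteVert v),
    hσ.facePerm_deleteVert_firstReturn hvu hvw hN huw hp hφq,
    ← hσ.cycleCount_firstReturn_facePerm hvu hvw hN huw,
    cycleCount_mul_swap_of_not_sameCycle hsep]

theorem isRotationSystem_of_firstReturn (hvu : G.Adj v u) (hvw : G.Adj v w)
    (hN : ∀ z, G.Adj v z → z = u ∨ z = w) (hfst : ∀ d, (σ d).fst = d.fst)
    (hσ' : IsRotationSystem (G.deleteVert v) (firstReturn σ ι))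
    (hab : σ hvu.dart = hvw.dart)
    (hu : σ hvu.symm.dart ∈ Set.range ι) (hw : σ hvw.symm.dart ∈ Set.range ι) :
    IsRotationSystem G σ := by
  rw [isRotationSystem_iff] at hσ' ⊢
  refine ⟨hfst, fun d d' h => ?_⟩
  by_cases hdv : d.fst = v
  · have hab' : σ.SameCycle hvu.dart hvw.dart := hab ▸ SameCycle.rfl.apply_right
    rcases eq_dart_or_eq_dart_of_fst_eq hvu hvw hN hdv with rfl | rfl <;>
      rcases eq_dart_or_eq_dart_of_fst_eq hvu hvw hN (h ▸ hdv) with rfl | rfl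
    exacts [.rfl, hab', hab'.symm, .rfl]
  have hreach : ∀ d : G.Dart, d.fst ≠ v → ∃ e, σ.SameCycle d (ι e) := by
    intro d hd
    by_cases hd' : d.snd = v
    · obtain ⟨e, he⟩ : σ d ∈ Set.range ι := by
        rcases eq_dart_or_eq_dart_of_snd_eq hvu hvw hN hd' with rfl | rfl
        exacts [hu, hw]
      exact ⟨e, he ▸ SameCycle.rfl.apply_right⟩
    obtain ⟨e, rfl⟩ := mem_range_deleteVertEmbedding_mapDart.2 ⟨hd, hd'⟩
    exact ⟨e, .rfl⟩
  obtain ⟨e, he⟩ := hreach d hdv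
  obtain ⟨e', he'⟩ := hreach d' (h ▸ hdv)
  have hee' : e.fst = e'.fst :=
    Subtype.ext ((fst_eq_of_sameCycle hfst he).trans (h.trans (fst_eq_of_sameCycle hfst he').symm))
  exact he.trans ((sameCycle_firstReturn_iff.1 (hσ'.2 e e' hee')).trans he'.symm)

section Insertion

variable [DecidableEq V] (σ' : Perm (G.deleteVert v).Dart) (hvu : G.Adj v u) (hvw : G.Adj v w)
  (huw : G.Adj u w)

theorem firstReturn_insertionRotation (hσ' : ∀ e, (σ' e).fst = e.fst) :
    firstReturn (insertionRotation σ' hvu hvw huw) ι = σ' := by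
  obtain ⟨t, ht⟩ := dart_mem_range_mapDart huw hvu.ne' hvw.ne'
  have ht' : ι t.symm = huw.symm.dart := by rw [Embedding.mapDart_symm, ht]; rfl
  have hout : ∀ {x : V} (h : G.Adj x v), h.dart ∉ Set.range ι := fun h hmem =>
    (mem_range_deleteVertEmbedding_mapDart.1 hmem).2 rfl
  ext e : 1
  by_cases he : e = t.symm
  · subst he
    refine firstReturn_eq_of_apply_apply ?_ ?_
    · rw [ht', insertionRotation_apply_w_u]
      exact hout _
    · rw [ht', insertionRotation_apply_w_u, insertionRotation_apply_w_v σ' hvu hvw huw hσ' ht]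
  have hιe : ι e ≠ huw.symm.dart := fun h => he ((ι).injective (h.trans ht'.symm))
  by_cases he' : σ' e = t
  · refine firstReturn_eq_of_apply_apply ?_ ?_
    · rw [insertionRotation_apply_mapDart σ' hvu hvw huw hιe, he', ht, swap_apply_left]
      exact hout _
    · rw [insertionRotation_apply_mapDart σ' hvu hvw huw hιe, he', ht, swap_apply_left,
        insertionRotation_apply_u_v, ← ht]
  · refine firstReturn_eq_of_apply ?_
    rw [insertionRotation_apply_mapDart σ' hvu hvw huw hιe, swap_apply_of_ne_of_ne
      (fun h => he' ((ι).injective (h.trans ht.symm))) (mapDart_ne_dart _ hvu).2]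

theorem isRotationSystem_insertionRotation (hσ' : IsRotationSystem (G.deleteVert v) σ')
    (hN : ∀ z, G.Adj v z → z = u ∨ z = w) :
    IsRotationSystem G (insertionRotation σ' hvu hvw huw) := by
  have hfst : ∀ d, (insertionRotation σ' hvu hvw huw d).fst = d.fst := fun d => by
    rw [insertionRotation, mul_apply, mul_apply, mul_apply,
      swap_apply_fst (a := huw.dart) (b := hvu.symm.dart) rfl,
      swap_apply_fst (a := hvu.dart) (b := hvw.dart) rfl, viaEmbedding_mapDart_apply_fst _ hσ'.1,
      swap_apply_fst (a := huw.symm.dart) (b := hvw.symm.dart) rfl]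
  obtain ⟨t, ht⟩ := dart_mem_range_mapDart huw hvu.ne' hvw.ne'
  refine isRotationSystem_of_firstReturn hvu hvw hN hfst
    ((firstReturn_insertionRotation σ' hvu hvw huw hσ'.1).symm ▸ hσ')
    (insertionRotation_apply_v_u σ' hvu hvw huw) ?_ ?_
  · rw [insertionRotation_apply_u_v]
    exact ⟨t, ht⟩
  · rw [insertionRotation_apply_w_v σ' hvu hvw huw hσ'.1 ht]
    exact ⟨_, rfl⟩

end Insertion

end Finite

section GenusComparison

variable [Fintype V] [DecidableEq V] [DecidableRel G.Adj]

theorem embGenus_eq_embGenus_deleteVert_add (hdeg : G.degree v = 2) (σ : Perm G.Dart)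
    (σ' : Perm (G.deleteVert v).Dart) :
    embGenus G σ =
      embGenus (G.deleteVert v) σ' +
        ((numFaces (G.deleteVert v) σ' : ℚ) + 1 - numFaces G σ) / 2 := by
  have hE := card_edgeSet_deleteVert_add_degree (G := G) (v := v)
  have hV : Nat.card {x : V // x ≠ v} + 1 = Nat.card V := by
    rw [← Finite.card_option, Nat.card_congr (Equiv.optionSubtypeNe v)]
  rw [hdeg] at hE
  simp only [embGenus, ← hE, ← hV]
  push_cast
  ring

theorem IsRotationSystem.embGenus_firstReturn_le (hσ : IsRotationSystem G σ)
    (hdeg : G.degree v = 2) (hvu : G.Adj v u) (hvw : G.Adj v w)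
    (hN : ∀ z, G.Adj v z → z = u ∨ z = w) (huw : G.Adj u w) :
    embGenus (G.deleteVert v) (firstReturn σ ι) ≤ embGenus G σ := by
  have hF : (numFaces G σ : ℚ) ≤ numFaces (G.deleteVert v) (firstReturn σ ι) + 1 := by
    exact_mod_cast hσ.numFaces_le_numFaces_deleteVert_add_one hvu hvw hN huw
  rw [embGenus_eq_embGenus_deleteVert_add hdeg σ (firstReturn σ ι)]
  linarith

theorem embGenus_insertionRotation {σ' : Perm (G.deleteVert v).Dart}
    (hσ' : IsRotationSystem (G.deleteVert v) σ') (hdeg : G.degree v = 2) (hvu : G.Adj v u)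
    (hvw : G.Adj v w) (hN : ∀ z, G.Adj v z → z = u ∨ z = w) (huw : G.Adj u w) :
    embGenus G (insertionRotation σ' hvu hvw huw) = embGenus (G.deleteVert v) σ' := by
  have hσ := isRotationSystem_insertionRotation σ' hvu hvw huw hσ' hN
  have hF := hσ.numFaces_eq_numFaces_deleteVert_add_one hvu hvw hN huw
    (insertionRotation_apply_w_u σ' hvu hvw huw) (insertionRotation_apply_u_v σ' hvu hvw huw)
  rw [firstReturn_insertionRotation σ' hvu hvw huw hσ'.1] at hF
  rw [embGenus_eq_embGenus_deleteVert_add hdeg _ σ', hF]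
  push_cast
  ring

end GenusComparison

end DeleteVertex

end Genus

open SimpleGraph in
theorem delete_degree_two_vertex_adjacent_neighbours_same_genus_general
    {V : Type*} [Fintype V] [DecidableEq V] (G : SimpleGraph V) [DecidableRel G.Adj]
    (hconn : G.Connected)
    (v u w : V) (hdeg : G.degree v = 2)
    (hvu : G.Adj v u) (hvw : G.Adj v w) (huw : u ≠ w) (hadj : G.Adj u w) :
    (G.comap (Subtype.val : {x : V // x ≠ v} → V)).Connected ∧
      ∃ g : ℚ, IsLeast (Genus.genusSet G) g ∧
        IsLeast (Genus.genusSet (G.comap (Subtype.val : {x : V // x ≠ v} → V))) g := by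
  have hN := neighbor_eq_or_eq_of_degree_eq_two hdeg hvu hvw huw
  refine ⟨connected_deleteVert hconn hvu hadj hN, ?_⟩
  obtain ⟨g, hg⟩ := Genus.exists_isLeast_genusSet G
  refine ⟨g, hg, hg.of_forall_exists_le ?_ ?_⟩
  · rintro _ ⟨σ, hσ, rfl⟩
    exact ⟨_, ⟨_, hσ.firstReturn_mapDart (G.deleteVertEmbedding v), rfl⟩,
      hσ.embGenus_firstReturn_le hdeg hvu hvw hN hadj⟩
  · rintro _ ⟨σ', hσ', rfl⟩
    exact ⟨_, ⟨_, Genus.isRotationSystem_insertionRotation σ' hvu hvw hadj hσ' hN, rfl⟩,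
      (Genus.embGenus_insertionRotation hσ' hdeg hvu hvw hN hadj).le⟩

open SimpleGraph in
/-- If `G` is a finite connected simple graph with at least four vertices and
`v` is a vertex of degree 2 whose two distinct neighbours `u` and `w` are adjacent in `G`,
then the graph `G − v` obtained by deleting `v` (and its two incident edges) is connected
and has the same genus as `G`. -/
theorem delete_degree_two_vertex_adjacent_neighbours_same_genus
    {V : Type*} [Fintype V] [DecidableEq V] (G : SimpleGraph V) [DecidableRel G.Adj]
    (hconn : G.Connected) (hcard : 4 ≤ Fintype.card V)
    (v u w : V) (hdeg : G.degree v = 2)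
    (hvu : G.Adj v u) (hvw : G.Adj v w) (huw : u ≠ w) (hadj : G.Adj u w) :
    (G.comap (Subtype.val : {x : V // x ≠ v} → V)).Connected ∧
      ∃ g : ℚ, IsLeast (Genus.genusSet G) g ∧
        IsLeast (Genus.genusSet (G.comap (Subtype.val : {x : V // x ≠ v} → V))) g :=
  delete_degree_two_vertex_adjacent_neighbours_same_genus_general G hconn v u w hdeg hvu hvw huw
    hadj
end
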